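/- arXiv:1612.08588 — 3 statements merged into one kernel-verified Lean document; each statement's English description precedes it below -/
import Mathlib

section
/- Let n be a positive integer, let p1, p2 be linearly independent vectors in ℤ^n with all entries positive, let r ∈ ℤ^n, and let k1, k2 be integers. Let M1, M2 be positive integers, set a2 = M2·p2 + r (assumed to have all entries positive) and a1 = M1·p1 + a2. Let B = {x ∈ ℝ^n : 0 ≤ x_j ≤ 1 for all j}. Assume the sets S3 = {x ∈ B : p1·x = k1+1, p2·x ≤ k2} and S4 = {x ∈ B : p1·x = k1+1, p2·x ≥ k2+1} are nonempty, and that β'2, β2 are real numbers with sup{a2·x : x ∈ S3} < β'2 ≤ β2 < inf{a2·x : x ∈ S4}. Set β'1 = β'2 + (k1+1)·M1 and β1 = β2 + (k1+1)·M1. Then the set {x ∈ B : β'1 ≤ a1·x ≤ β1 and p1·x = k1+1} is nonempty. -/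
/-!
Both `S3` and `S4` lie in the slice `H = {x ∈ B | p1·x = k1+1}` of the box, which is convex and
hence connected. A point of `S3` has `a2·x < β'2` and a point of `S4` has `a2·x > β2 ≥ β'2`, so by
the intermediate value theorem some `x ∈ H` has `a2·x = β'2`. Since `a1 = M1·p1 + a2`, this `x`
satisfies `a1·x = (k1+1)·M1 + β'2 ∈ [β'1, β1]`.
-/

open Finset

theorem setOf_forall_mem_unitInterval {ι : Type*} :
    {x : ι → ℝ | ∀ j, 0 ≤ x j ∧ x j ≤ 1} = Set.Icc 0 1 := by
  ext x
  simp [Pi.le_def, forall_and]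

section LinearFunctional

variable {ι : Type*} [Fintype ι]

theorem continuous_sum_mul (c : ι → ℝ) : Continuous fun x : ι → ℝ => ∑ i, c i * x i := by
  fun_prop

theorem isLinearMap_sum_mul (c : ι → ℝ) : IsLinearMap ℝ fun x : ι → ℝ => ∑ i, c i * x i where
  map_add x y := by simp only [Pi.add_apply, mul_add, sum_add_distrib]
  map_smul a x := by simp only [Pi.smul_apply, smul_eq_mul, mul_sum, mul_left_comm]

theorem convex_Icc_inter_sum_mul_eq (c : ι → ℝ) (b : ℝ) :
    Convex ℝ {x ∈ Set.Icc (0 : ι → ℝ) 1 | ∑ i, c i * x i = b} :=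
  (convex_Icc 0 1).inter (convex_hyperplane (isLinearMap_sum_mul c) b)

theorem bddAbove_image_sum_mul {s : Set (ι → ℝ)} (hs : s ⊆ Set.Icc 0 1) (c : ι → ℝ) :
    BddAbove ((fun x => ∑ i, c i * x i) '' s) :=
  (isCompact_Icc.bddAbove_image (continuous_sum_mul c).continuousOn).mono (Set.image_mono hs)

theorem bddBelow_image_sum_mul {s : Set (ι → ℝ)} (hs : s ⊆ Set.Icc 0 1) (c : ι → ℝ) :
    BddBelow ((fun x => ∑ i, c i * x i) '' s) :=
  (isCompact_Icc.bddBelow_image (continuous_sum_mul c).continuousOn).mono (Set.image_mono hs)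

theorem sum_intCast_mul_add_mul (M : ℤ) (p a : ι → ℤ) (x : ι → ℝ) :
    ∑ i, ((M * p i + a i : ℤ) : ℝ) * x i = M * ∑ i, (p i : ℝ) * x i + ∑ i, (a i : ℝ) * x i := by
  push_cast
  simp only [add_mul, sum_add_distrib, mul_assoc, mul_sum]

end LinearFunctional

theorem ckp_branch_nonempty_general (n : ℕ)
    (p1 p2 : Fin n → ℤ)
    (k1 k2 : ℤ) (M1 : ℤ)
    (a2 : Fin n → ℤ)
    (a1 : Fin n → ℤ) (ha1 : a1 = fun i => M1 * p1 i + a2 i)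
    (B : Set (Fin n → ℝ)) (hB : B = {x | ∀ j, 0 ≤ x j ∧ x j ≤ 1})
    (S3 S4 : Set (Fin n → ℝ))
    (hS3 : S3 = {x ∈ B | ∑ i, (p1 i : ℝ) * x i = (k1 : ℝ) + 1 ∧
      ∑ i, (p2 i : ℝ) * x i ≤ (k2 : ℝ)})
    (hS4 : S4 = {x ∈ B | ∑ i, (p1 i : ℝ) * x i = (k1 : ℝ) + 1 ∧
      (k2 : ℝ) + 1 ≤ ∑ i, (p2 i : ℝ) * x i})
    (hS3ne : S3.Nonempty) (hS4ne : S4.Nonempty)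
    (β'2 β2 : ℝ)
    (hsup : sSup ((fun x => ∑ i, (a2 i : ℝ) * x i) '' S3) < β'2)
    (hββ : β'2 ≤ β2)
    (hinf : β2 < sInf ((fun x => ∑ i, (a2 i : ℝ) * x i) '' S4))
    (β'1 β1 : ℝ)
    (hβ'1 : β'1 = β'2 + ((k1 : ℝ) + 1) * (M1 : ℝ))
    (hβ1 : β1 = β2 + ((k1 : ℝ) + 1) * (M1 : ℝ)) :
    ∃ x ∈ B, (β'1 ≤ ∑ i, (a1 i : ℝ) * x i ∧ ∑ i, (a1 i : ℝ) * x i ≤ β1) ∧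
      ∑ i, (p1 i : ℝ) * x i = (k1 : ℝ) + 1 := by
  rw [setOf_forall_mem_unitInterval] at hB
  subst hB hS3 hS4 ha1
  obtain ⟨u, hu⟩ := hS3ne
  obtain ⟨v, hv⟩ := hS4ne
  have hu_lt : ∑ i, (a2 i : ℝ) * u i < β'2 :=
    (le_csSup (bddAbove_image_sum_mul (fun x hx => hx.1) _) (Set.mem_image_of_mem _ hu)).trans_lt
      hsup
  have hv_gt : β2 < ∑ i, (a2 i : ℝ) * v i :=
    hinf.trans_le
      (csInf_le (bddBelow_image_sum_mul (fun x hx => hx.1) _) (Set.mem_image_of_mem _ hv))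
  obtain ⟨x, ⟨hxB, hxp1⟩, hxa2⟩ :=
    (convex_Icc_inter_sum_mul_eq _ _).isPreconnected.intermediate_value
      ⟨hu.1, hu.2.1⟩ ⟨hv.1, hv.2.1⟩ (continuous_sum_mul _).continuousOn ⟨hu_lt.le, hββ.trans hv_gt.le⟩
  have ha1x : ∑ i, ((M1 * p1 i + a2 i : ℤ) : ℝ) * x i = M1 * ((k1 : ℝ) + 1) + β'2 := by
    rw [sum_intCast_mul_add_mul, hxp1, ← hxa2]
  refine ⟨x, hxB, ⟨?_, ?_⟩, hxp1⟩ <;> simp only [ha1x] <;> linarith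

theorem ckp_branch_nonempty (n : ℕ) (hn : 0 < n)
    (p1 p2 r : Fin n → ℤ)
    (hp1pos : ∀ i, 0 < p1 i) (hp2pos : ∀ i, 0 < p2 i)
    (hli : LinearIndependent ℤ ![p1, p2])
    (k1 k2 : ℤ) (M1 M2 : ℤ) (hM1 : 0 < M1) (hM2 : 0 < M2)
    (a2 : Fin n → ℤ) (ha2 : a2 = fun i => M2 * p2 i + r i)
    (ha2pos : ∀ i, 0 < a2 i)
    (a1 : Fin n → ℤ) (ha1 : a1 = fun i => M1 * p1 i + a2 i)
    (B : Set (Fin n → ℝ)) (hB : B = {x | ∀ j, 0 ≤ x j ∧ x j ≤ 1})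
    (S3 S4 : Set (Fin n → ℝ))
    (hS3 : S3 = {x ∈ B | ∑ i, (p1 i : ℝ) * x i = (k1 : ℝ) + 1 ∧
      ∑ i, (p2 i : ℝ) * x i ≤ (k2 : ℝ)})
    (hS4 : S4 = {x ∈ B | ∑ i, (p1 i : ℝ) * x i = (k1 : ℝ) + 1 ∧
      (k2 : ℝ) + 1 ≤ ∑ i, (p2 i : ℝ) * x i})
    (hS3ne : S3.Nonempty) (hS4ne : S4.Nonempty)
    (β'2 β2 : ℝ)
    (hsup : sSup ((fun x => ∑ i, (a2 i : ℝ) * x i) '' S3) < β'2)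
    (hββ : β'2 ≤ β2)
    (hinf : β2 < sInf ((fun x => ∑ i, (a2 i : ℝ) * x i) '' S4))
    (β'1 β1 : ℝ)
    (hβ'1 : β'1 = β'2 + ((k1 : ℝ) + 1) * (M1 : ℝ))
    (hβ1 : β1 = β2 + ((k1 : ℝ) + 1) * (M1 : ℝ)) :
    ∃ x ∈ B, (β'1 ≤ ∑ i, (a1 i : ℝ) * x i ∧ ∑ i, (a1 i : ℝ) * x i ≤ β1) ∧
      ∑ i, (p1 i : ℝ) * x i = (k1 : ℝ) + 1 :=
  ckp_branch_nonempty_general n p1 p2 k1 k2 M1 a2 a1 ha1 B hB S3 S4 hS3 hS4 hS3ne hS4ne β'2 β2 hsup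
    hββ hinf β'1 β1 hβ'1 hβ1
end

section
/- Let n and t be positive integers with t ≤ n, let p1, …, pt ∈ ℤ^n, let M1, …, Mt be integers, let r ∈ ℤ^n, and set a = M1·p1 + ⋯ + Mt·pt + r ∈ ℤ^n. Let A be the (n+1)×n integer matrix whose first row is a and whose remaining n rows form the n×n identity matrix. Suppose v1, …, vk ∈ ℤ^n are linearly independent vectors satisfying pi·vj = 0 for all i = 1,…,t and j = 1,…,k. Then the vectors A·v1, …, A·vk are linearly independent elements of the lattice L(A) = {A·x : x ∈ ℤ^n}, and for each j, ‖A·vj‖ ≤ (‖r‖ + 1)·‖vj‖, where ‖·‖ is the Euclidean norm. Consequently, for every k ≤ n − t, the k-th successive minimum of L(A) satisfies Λ_k(L(A)) ≤ (‖r‖ + 1)·Λ_k(N(P)), where N(P) = {x ∈ ℤ^n : pi·x = 0 for i = 1,…,t} is the kernel lattice of the matrix P with rows p1,…,pt. -/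
open Finset

/-- Euclidean norm of an integer vector. -/
noncomputable def enorm {m : ℕ} (v : Fin m → ℤ) : ℝ :=
  Real.sqrt (∑ i, ((v i : ℝ)) ^ 2)

/-- The `k`-th successive minimum of a set (lattice) of integer vectors:
the infimum of those reals `s` such that the set contains `k` linearly
independent vectors each of Euclidean norm at most `s`. -/
noncomputable def succMin {m : ℕ} (L : Set (Fin m → ℤ)) (k : ℕ) : ℝ :=
  sInf {s : ℝ | ∃ w : Fin k → (Fin m → ℤ),
    (∀ j, w j ∈ L) ∧ LinearIndependent ℤ w ∧ ∀ j, _root_.enorm (w j) ≤ s}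


/-! The matrix `A` acts as `x ↦ (a ⬝ᵥ x, x)`. On the kernel lattice of `P` the multiples of the
`pᵢ` drop out of `a ⬝ᵥ x`, leaving `r ⬝ᵥ x`, so Cauchy–Schwarz gives
`‖A x‖ ≤ |r ⬝ᵥ x| + ‖x‖ ≤ (‖r‖ + 1) ‖x‖`. Since `x ↦ A x` is injective and linear, it carries
independent kernel vectors to independent vectors of `L(A)`, which compares the successive minima.
Rank–nullity gives the kernel rank at least `n - t`, so for `k ≤ n - t` the infimum defining
`Λ_k(N(P))` is not over the empty set (where `sInf` would be the junk value `0`). -/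

open Module Matrix

lemma enorm_nonneg {m : ℕ} (v : Fin m → ℤ) : 0 ≤ _root_.enorm v := Real.sqrt_nonneg _

lemma enorm_cons_le {m : ℕ} (x : ℤ) (w : Fin m → ℤ) :
    _root_.enorm (Fin.cons x w : Fin (m + 1) → ℤ) ≤ |(x : ℝ)| + _root_.enorm w := by
  have hw : _root_.enorm w ^ 2 = ∑ i, (w i : ℝ) ^ 2 := Real.sq_sqrt (by positivity)
  rw [_root_.enorm, Real.sqrt_le_iff, Fin.sum_univ_succ]
  refine ⟨add_nonneg (abs_nonneg _) (enorm_nonneg w), ?_⟩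
  simp only [Fin.cons_zero, Fin.cons_succ]
  nlinarith [sq_abs (x : ℝ), abs_nonneg (x : ℝ), enorm_nonneg w]

lemma abs_dotProduct_le_enorm_mul_enorm {m : ℕ} (u w : Fin m → ℤ) :
    |((u ⬝ᵥ w : ℤ) : ℝ)| ≤ _root_.enorm u * _root_.enorm w := by
  rw [_root_.enorm, _root_.enorm, ← Real.sqrt_mul (by positivity)]
  apply Real.abs_le_sqrt
  push_cast [dotProduct]
  exact Finset.sum_mul_sq_le_sq_mul_sq _ _ _

lemma sum_smul_add_dotProduct_of_forall_dotProduct_eq_zero {R : Type*} [CommSemiring R]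
    {m t : ℕ} (p : Fin t → Fin m → R) (M : Fin t → R) (r : Fin m → R) {w : Fin m → R}
    (hw : ∀ i, p i ⬝ᵥ w = 0) :
    (∑ i, M i • p i + r) ⬝ᵥ w = r ⬝ᵥ w := by
  simp [add_dotProduct, sum_dotProduct, smul_dotProduct, hw]

lemma mulVec_eq_cons_of_rows {R : Type*} [NonAssocSemiring R] {n : ℕ}
    {A : Matrix (Fin (n + 1)) (Fin n) R} {a : Fin n → R} (hA0 : ∀ j, A 0 j = a j)
    (hAsucc : ∀ i : Fin n, ∀ j, A i.succ j = if i = j then 1 else 0) (w : Fin n → R) :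
    A *ᵥ w = Fin.cons (a ⬝ᵥ w) w := by
  ext i
  refine Fin.cases ?_ (fun i => ?_) i
  · simp [mulVec, dotProduct, hA0]
  · simp [mulVec, dotProduct, hAsucc, ite_mul]

lemma mulVecLin_injective_of_rows_succ {R : Type*} [CommSemiring R] {n : ℕ}
    {A : Matrix (Fin (n + 1)) (Fin n) R}
    (hAsucc : ∀ i : Fin n, ∀ j, A i.succ j = if i = j then 1 else 0) :
    Function.Injective A.mulVecLin := fun x y hxy => by
  have hcons := mulVec_eq_cons_of_rows (a := A 0) (fun _ => rfl) hAsucc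
  rw [mulVecLin_apply, mulVecLin_apply, hcons, hcons] at hxy
  exact (Fin.cons_injective2 hxy).2

lemma enorm_mulVec_le {n t : ℕ} {p : Fin t → Fin n → ℤ} {M : Fin t → ℤ} {r : Fin n → ℤ}
    {A : Matrix (Fin (n + 1)) (Fin n) ℤ} (hA0 : ∀ j, A 0 j = (∑ i, M i • p i + r) j)
    (hAsucc : ∀ i : Fin n, ∀ j, A i.succ j = if i = j then 1 else 0)
    {w : Fin n → ℤ} (hw : ∀ i, p i ⬝ᵥ w = 0) :
    _root_.enorm (A *ᵥ w) ≤ (_root_.enorm r + 1) * _root_.enorm w := by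
  rw [mulVec_eq_cons_of_rows hA0 hAsucc,
    sum_smul_add_dotProduct_of_forall_dotProduct_eq_zero _ _ _ hw]
  calc _ ≤ |((r ⬝ᵥ w : ℤ) : ℝ)| + _root_.enorm w := enorm_cons_le _ _
    _ ≤ _root_.enorm r * _root_.enorm w + _root_.enorm w := by
      gcongr; exact abs_dotProduct_le_enorm_mul_enorm r w
    _ = _ := by ring

lemma sub_le_finrank_ker_mulVecLin {R : Type*} [CommRing R] [IsDomain R] {n t : ℕ}
    (P : Matrix (Fin t) (Fin n) R) :
    n - t ≤ finrank R (LinearMap.ker P.mulVecLin) := by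
  have h_quot := Submodule.finrank_quotient_add_finrank (LinearMap.ker P.mulVecLin)
  have h_range := Submodule.finrank_le (LinearMap.range P.mulVecLin)
  rw [P.mulVecLin.quotKerEquivRange.finrank_eq] at h_quot
  simp only [finrank_fin_fun] at h_quot h_range
  omega

lemma exists_linearIndependent_mulVec_eq_zero {R : Type*} [CommRing R] [IsDomain R]
    {n t k : ℕ} (P : Matrix (Fin t) (Fin n) R) (hk : k ≤ n - t) :
    ∃ w : Fin k → Fin n → R, (∀ j, P *ᵥ w j = 0) ∧ LinearIndependent R w := by
  obtain ⟨u, hu⟩ :=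
    exists_linearIndependent_of_le_finrank (hk.trans (sub_le_finrank_ker_mulVecLin P))
  exact ⟨fun j => u j, fun j => LinearMap.mem_ker.mp (u j).2, hu.map' _ (Submodule.ker_subtype _)⟩

lemma succMin_le_mul_succMin {m m' k : ℕ} (hk : 0 < k) {L : Set (Fin m → ℤ)}
    {L' : Set (Fin m' → ℤ)} (f : (Fin m → ℤ) →ₗ[ℤ] (Fin m' → ℤ)) (hf : Function.Injective f)
    (hfL : Set.MapsTo f L L') {c : ℝ} (hc : 0 ≤ c)
    (hfc : ∀ x ∈ L, _root_.enorm (f x) ≤ c * _root_.enorm x)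
    (hL : ∃ w : Fin k → Fin m → ℤ, (∀ j, w j ∈ L) ∧ LinearIndependent ℤ w) :
    succMin L' k ≤ c * succMin L k := by
  obtain ⟨w, hwL, hwli⟩ := hL
  rw [succMin, succMin, ← smul_eq_mul, ← Real.sInf_smul_of_nonneg hc]
  refine csInf_le_csInf ⟨0, ?_⟩ (Set.smul_set_nonempty.mpr ?_) ?_
  · rintro s ⟨u, -, -, hu⟩
    exact (enorm_nonneg _).trans (hu ⟨0, hk⟩)
  · exact ⟨_, w, hwL, hwli, fun j => single_le_sum (fun j _ => enorm_nonneg (w j)) (mem_univ j)⟩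
  · rintro _ ⟨s, ⟨u, huL, huli, hus⟩, rfl⟩
    refine ⟨f ∘ u, fun j => hfL (huL j), huli.map' f (LinearMap.ker_eq_bot.mpr hf), fun j => ?_⟩
    exact (hfc _ (huL j)).trans (mul_le_mul_of_nonneg_left (hus j) hc)

theorem ckp_kernel_lattice_succ_min_general (n t : ℕ)
    (p : Fin t → Fin n → ℤ) (M : Fin t → ℤ) (r : Fin n → ℤ)
    (a : Fin n → ℤ) (ha : a = fun j => (∑ i, M i * p i j) + r j)
    (A : Matrix (Fin (n + 1)) (Fin n) ℤ)
    (hA0 : ∀ j, A 0 j = a j)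
    (hAsucc : ∀ i : Fin n, ∀ j, A i.succ j = if i = j then 1 else 0)
    (k : ℕ) (v : Fin k → (Fin n → ℤ))
    (hvli : LinearIndependent ℤ v)
    (hvker : ∀ (i : Fin t) (j : Fin k), ∑ m, p i m * v j m = 0) :
    (LinearIndependent ℤ (fun j => A.mulVec (v j)) ∧
      (∀ j, A.mulVec (v j) ∈ {y : Fin (n + 1) → ℤ | ∃ x : Fin n → ℤ, y = A.mulVec x}) ∧
      (∀ j, _root_.enorm (A.mulVec (v j)) ≤ (_root_.enorm r + 1) * _root_.enorm (v j))) ∧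
    ∀ k' : ℕ, 1 ≤ k' → k' ≤ n - t →
      succMin {y : Fin (n + 1) → ℤ | ∃ x : Fin n → ℤ, y = A.mulVec x} k' ≤
        (_root_.enorm r + 1) * succMin {x : Fin n → ℤ | ∀ i : Fin t, ∑ m, p i m * x m = 0} k' := by
  have hA0_sum : ∀ j, A 0 j = (∑ i, M i • p i + r) j := fun j => by simp [hA0, ha]
  have hinj := mulVecLin_injective_of_rows_succ hAsucc
  have hbound : ∀ w : Fin n → ℤ, (∀ i, p i ⬝ᵥ w = 0) →
      _root_.enorm (A *ᵥ w) ≤ (_root_.enorm r + 1) * _root_.enorm w :=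
    fun w hw => enorm_mulVec_le hA0_sum hAsucc hw
  refine ⟨⟨hvli.map' A.mulVecLin (LinearMap.ker_eq_bot.mpr hinj), fun j => ⟨v j, rfl⟩,
    fun j => hbound _ (fun i => hvker i j)⟩, fun k' hk' hk't => ?_⟩
  obtain ⟨w, hw, hwli⟩ := exists_linearIndependent_mulVec_eq_zero (Matrix.of p) hk't
  refine succMin_le_mul_succMin hk' A.mulVecLin hinj (fun x _ => ?_)
    (by linarith [enorm_nonneg r]) hbound ⟨w, fun j i => congrFun (hw j) i, hwli⟩
  exact ⟨x, rfl⟩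

theorem ckp_kernel_lattice_succ_min (n t : ℕ) (hn : 0 < n) (ht : 0 < t) (htn : t ≤ n)
    (p : Fin t → Fin n → ℤ) (M : Fin t → ℤ) (r : Fin n → ℤ)
    (a : Fin n → ℤ) (ha : a = fun j => (∑ i, M i * p i j) + r j)
    (A : Matrix (Fin (n + 1)) (Fin n) ℤ)
    (hA0 : ∀ j, A 0 j = a j)
    (hAsucc : ∀ i : Fin n, ∀ j, A i.succ j = if i = j then 1 else 0)
    (k : ℕ) (v : Fin k → (Fin n → ℤ))
    (hvli : LinearIndependent ℤ v)
    (hvker : ∀ (i : Fin t) (j : Fin k), ∑ m, p i m * v j m = 0) :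
    (LinearIndependent ℤ (fun j => A.mulVec (v j)) ∧
      (∀ j, A.mulVec (v j) ∈ {y : Fin (n + 1) → ℤ | ∃ x : Fin n → ℤ, y = A.mulVec x}) ∧
      (∀ j, _root_.enorm (A.mulVec (v j)) ≤ (_root_.enorm r + 1) * _root_.enorm (v j))) ∧
    ∀ k' : ℕ, 1 ≤ k' → k' ≤ n - t →
      succMin {y : Fin (n + 1) → ℤ | ∃ x : Fin n → ℤ, y = A.mulVec x} k' ≤
        (_root_.enorm r + 1) * succMin {x : Fin n → ℤ | ∀ i : Fin t, ∑ m, p i m * x m = 0} k' :=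
  ckp_kernel_lattice_succ_min_general n t p M r a ha A hA0 hAsucc k v hvli hvker
end

section
/- Let n ≥ t ≥ 1 be integers, let p1, …, pt ∈ ℤ^n, let r ∈ ℤ^n, let M1, …, Mt be positive integers, and set a = M1·p1 + ⋯ + Mt·pt + r. Let A be the (n+1)×n integer matrix with first row a and remaining rows the identity, and let U be an n×n integer matrix with determinant ±1; write Ã = A·U and let Ã_{:,j} denote the j-th column of Ã. Fix ℓ ∈ {1,…,t} and an index j ∈ {1,…,n}, and suppose that the j-th entry of p_i·U is zero for every i < ℓ while the j-th entry of p_ℓ·U is nonzero. Then M_ℓ ≤ (‖M_{ℓ+1}·p_{ℓ+1} + ⋯ + M_t·p_t + r‖ + 1) · ‖Ã_{:,j}‖, where ‖·‖ is the Euclidean norm. -/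
open Finset

theorem cbr_column_norm_lower_bound (n t : ℕ) (ht : 1 ≤ t) (htn : t ≤ n)
    (p : Fin t → Fin n → ℤ) (r : Fin n → ℤ)
    (M : Fin t → ℤ) (hMpos : ∀ i, 0 < M i)
    (a : Fin n → ℤ) (ha : a = fun j => (∑ i, M i * p i j) + r j)
    (A : Matrix (Fin (n + 1)) (Fin n) ℤ)
    (hA0 : ∀ j, A 0 j = a j)
    (hAsucc : ∀ i : Fin n, ∀ j, A i.succ j = if i = j then 1 else 0)
    (U : Matrix (Fin n) (Fin n) ℤ) (hU : U.det = 1 ∨ U.det = -1)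
    (ℓ : Fin t) (j : Fin n)
    (hzero : ∀ i : Fin t, i < ℓ → ∑ m, p i m * U m j = 0)
    (hnz : ∑ m, p ℓ m * U m j ≠ 0) :
    (M ℓ : ℝ) ≤
      (_root_.enorm (fun m => (∑ i ∈ Finset.univ.filter (fun i => ℓ < i), M i * p i m) + r m) + 1) *
        _root_.enorm (fun i => (A * U) i j) := by
  classical
  set s : Fin n → ℤ := fun m => (∑ i ∈ Finset.univ.filter (fun i => ℓ < i), M i * p i m) + r m
    with hsdef
  set w : Fin t → ℤ := fun i => ∑ m, p i m * U m j with hwdef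
  -- column entries
  have hcsucc : ∀ m : Fin n, (A * U) m.succ j = U m j := by
    intro m
    simp only [Matrix.mul_apply, hAsucc]
    simp [ite_mul]
  have hc0 : (A * U) 0 j = M ℓ * w ℓ + ∑ m, s m * U m j := by
    have h1 : (A * U) 0 j = ∑ i, M i * w i + ∑ m, r m * U m j := by
      simp only [Matrix.mul_apply, hA0, ha, hwdef]
      rw [Finset.sum_congr rfl (fun x _ => add_mul _ _ _), Finset.sum_add_distrib]
      congr 1
      rw [Finset.sum_congr rfl (fun x (_ : x ∈ Finset.univ) => Finset.sum_mul ..), Finset.sum_comm]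
      apply Finset.sum_congr rfl
      intro i _
      rw [Finset.mul_sum]
      apply Finset.sum_congr rfl
      intro m _
      ring
    have h2 : ∑ m, s m * U m j
        = ∑ i ∈ Finset.univ.filter (fun i => ℓ < i), M i * w i + ∑ m, r m * U m j := by
      simp only [hsdef, hwdef]
      rw [Finset.sum_congr rfl (fun x _ => add_mul _ _ _), Finset.sum_add_distrib]
      congr 1
      rw [Finset.sum_congr rfl (fun x (_ : x ∈ Finset.univ) => Finset.sum_mul ..), Finset.sum_comm]
      apply Finset.sum_congr rfl
      intro i _
      rw [Finset.mul_sum]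
      apply Finset.sum_congr rfl
      intro m _
      ring
    have h3 : ∑ i, M i * w i
        = M ℓ * w ℓ + ∑ i ∈ Finset.univ.filter (fun i => ℓ < i), M i * w i := by
      rw [← Finset.sum_filter_add_sum_filter_not Finset.univ (fun i => ℓ < i)]
      rw [add_comm]
      congr 1
      have : (Finset.univ.filter (fun i => ¬ ℓ < i)) = Finset.univ.filter (fun i => i ≤ ℓ) := by
        apply Finset.filter_congr
        intro i _
        simp [not_lt]
      rw [this]
      rw [Finset.sum_eq_single ℓ]
      · intro b hb hbne
        have hble : b ≤ ℓ := (Finset.mem_filter.mp hb).2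
        have : b < ℓ := lt_of_le_of_ne hble hbne
        simp only [hwdef]
        rw [hzero b this]
        ring
      · intro h
        simp at h
    rw [h1, h2, h3]
    ring
  -- real quantities
  set e : ℝ := enorm (fun i => (A * U) i j) with hedef
  set S : ℝ := enorm s with hSdef
  set NU : ℝ := Real.sqrt (∑ m, (U m j : ℝ) ^ 2) with hNUdef
  have he_nonneg : 0 ≤ e := Real.sqrt_nonneg _
  have hS_nonneg : 0 ≤ S := Real.sqrt_nonneg _
  have hNU_nonneg : 0 ≤ NU := Real.sqrt_nonneg _
  have hsum_nonneg : ∀ (k : ℕ) (f : Fin k → ℝ), (0:ℝ) ≤ ∑ i, f i ^ 2 := by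
    intro k f; exact Finset.sum_nonneg fun i _ => sq_nonneg _
  -- |c0| ≤ e
  have h1 : |((A * U) 0 j : ℝ)| ≤ e := by
    rw [hedef, _root_.enorm, ← Real.sqrt_sq_eq_abs]
    apply Real.sqrt_le_sqrt
    rw [Fin.sum_univ_succ]
    have : (0:ℝ) ≤ ∑ m : Fin n, ((A * U) m.succ j : ℝ) ^ 2 := hsum_nonneg _ _
    push_cast
    linarith
  -- NU ≤ e
  have h2 : NU ≤ e := by
    rw [hNUdef, hedef, _root_.enorm]
    apply Real.sqrt_le_sqrt
    rw [Fin.sum_univ_succ]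
    have h0 : (0:ℝ) ≤ ((A * U) 0 j : ℝ) ^ 2 := sq_nonneg _
    have heq : ∑ m : Fin n, ((A * U) m.succ j : ℝ) ^ 2 = ∑ m, (U m j : ℝ) ^ 2 := by
      apply Finset.sum_congr rfl
      intro m _
      rw [hcsucc m]
    rw [heq]
    linarith
  -- Cauchy-Schwarz: |∑ s m * U m j| ≤ S * NU
  have h3 : |((∑ m, s m * U m j : ℤ) : ℝ)| ≤ S * NU := by
    have : |∑ m, (s m : ℝ) * (U m j : ℝ)| ≤
        Real.sqrt (∑ m, (s m : ℝ)^2) * Real.sqrt (∑ m, (U m j : ℝ)^2) := by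
      have hsq := Finset.sum_mul_sq_le_sq_mul_sq Finset.univ
        (fun m : Fin n => (s m : ℝ)) (fun m => (U m j : ℝ))
      have habs : |∑ m, (s m : ℝ) * (U m j : ℝ)|
          = Real.sqrt ((∑ m, (s m : ℝ) * (U m j : ℝ))^2) := by
        rw [Real.sqrt_sq_eq_abs]
      rw [habs, ← Real.sqrt_mul (hsum_nonneg _ _)]
      exact Real.sqrt_le_sqrt hsq
    calc |((∑ m, s m * U m j : ℤ) : ℝ)|
        = |∑ m, (s m : ℝ) * (U m j : ℝ)| := by push_cast; rfl
      _ ≤ Real.sqrt (∑ m, (s m : ℝ)^2) * Real.sqrt (∑ m, (U m j : ℝ)^2) := this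
      _ = S * NU := by rw [hSdef, _root_.enorm, hNUdef]
  -- Mℓ ≤ |Mℓ * wℓ|
  have hwℓ : 1 ≤ |w ℓ| := by
    have hne : w ℓ ≠ 0 := hnz
    exact Int.one_le_abs (by omega)
  have h4 : (M ℓ : ℝ) ≤ |((M ℓ * w ℓ : ℤ) : ℝ)| := by
    have : M ℓ ≤ |M ℓ * w ℓ| := by
      rw [abs_mul, abs_of_pos (hMpos ℓ)]
      calc M ℓ = M ℓ * 1 := by ring
        _ ≤ M ℓ * |w ℓ| := by
            exact mul_le_mul_of_nonneg_left hwℓ (le_of_lt (hMpos ℓ))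
    exact_mod_cast this
  -- combine
  have h5 : |((M ℓ * w ℓ : ℤ) : ℝ)| ≤ |((A * U) 0 j : ℝ)| + |((∑ m, s m * U m j : ℤ) : ℝ)| := by
    have : ((M ℓ * w ℓ : ℤ) : ℝ) = ((A * U) 0 j : ℝ) - ((∑ m, s m * U m j : ℤ) : ℝ) := by
      rw [hc0]; push_cast; ring
    rw [this]
    exact abs_sub _ _
  have hSNU : S * NU ≤ S * e := mul_le_mul_of_nonneg_left h2 hS_nonneg
  calc (M ℓ : ℝ) ≤ |((M ℓ * w ℓ : ℤ) : ℝ)| := h4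
    _ ≤ |((A * U) 0 j : ℝ)| + |((∑ m, s m * U m j : ℤ) : ℝ)| := h5
    _ ≤ e + S * NU := add_le_add h1 h3
    _ ≤ e + S * e := by linarith
    _ = (S + 1) * e := by ring
end
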